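/- Every commutative, w*-approximately Connes amenable dual Banach algebra is weakly Connes amenable. -/

import Mathlib

/-! `j_A ∘ D` is always a w*-continuous derivation into `σwc(A)*`, the dual of the sub-bimodule
`σwc(A)`; this dual module is normal, and its predual `σwc(A)` is complete because it is closed
in `A` (the w*-continuous functionals on `A` are the norm-closed isometric image of `X` in `A*`).
So w*-approximate Connes amenability makes `j_A ∘ D` a w*-limit of `a · f_α - f_α · a`. When `A`
is commutative the two actions on `σwc(A)*` coincide, these differences vanish, and `j_A ∘ D = 0`
is inner. -/

noncomputable section

open Filter Topology

universe u

/-- The locally convex topology on `A` induced by a pairing `p : A → X → ℂ`,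
i.e. the initial topology for the family of maps `a ↦ p a x`, `x : X`. -/
def topOfPairing {A X : Type*} (p : A → X → ℂ) : TopologicalSpace A :=
  TopologicalSpace.induced p Pi.topologicalSpace

theorem continuous_topOfPairing_iff {B A X : Type*} {tB : TopologicalSpace B}
    {p : A → X → ℂ} {f : B → A} :
    Continuous[tB, topOfPairing p] f ↔
      ∀ x, Continuous[tB, inferInstance] fun b => p (f b) x := by
  rw [topOfPairing, continuous_induced_rng, continuous_pi_iff]
  exact Iff.rfl

theorem topOfPairing_eval_cont {A X : Type*} (p : A → X → ℂ) (x : X) :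
    Continuous[topOfPairing p, inferInstance] fun a => p a x :=
  continuous_topOfPairing_iff.1 (@continuous_id _ (topOfPairing p)) x

/-- The weak topology `σ(E, E*)` on a normed space `E`. -/
def weakTop (E : Type u) [NormedAddCommGroup E] [NormedSpace ℂ E] : TopologicalSpace E :=
  topOfPairing fun x (φ : E →L[ℂ] ℂ) => φ x

/-- The weak-* topology `σ(E*, E)` on the dual of a normed space `E`. -/
def wstarD (E : Type u) [NormedAddCommGroup E] [NormedSpace ℂ E] :
    TopologicalSpace (E →L[ℂ] ℂ) :=
  topOfPairing fun Λ (x : E) => Λ x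

section Core

variable {A X : Type u} [NormedAddCommGroup A] [NormedSpace ℂ A]
  [NormedAddCommGroup X] [NormedSpace ℂ X]

/-- The weak-* topology `σ(A, X)` on a dual Banach space `A`, where the duality with the
predual `X` is implemented by an isometric linear isomorphism `ρ : A ≅ X*`. -/
def wstar (ρ : A ≃ₗᵢ[ℂ] (X →L[ℂ] ℂ)) : TopologicalSpace A :=
  topOfPairing fun a (x : X) => ρ a x

theorem weakTop_cont_iff {B : Type*} {tB : TopologicalSpace B} {E : Type u}
    [NormedAddCommGroup E] [NormedSpace ℂ E] {f : B → E} :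
    Continuous[tB, weakTop E] f ↔
      ∀ φ : E →L[ℂ] ℂ, Continuous[tB, inferInstance] fun b => φ (f b) :=
  continuous_topOfPairing_iff

namespace WeakCont

variable {B : Type*} {E F : Type u} [NormedAddCommGroup E] [NormedSpace ℂ E]
  [NormedAddCommGroup F] [NormedSpace ℂ F]

theorem clm_comp (tB : TopologicalSpace B) (L : E →L[ℂ] F) {f : B → E}
    (hf : Continuous[tB, weakTop E] f) : Continuous[tB, weakTop F] fun b => L (f b) :=
  weakTop_cont_iff.2 fun φ => weakTop_cont_iff.1 hf (φ.comp L)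

theorem add (tB : TopologicalSpace B) {f g : B → E} (hf : Continuous[tB, weakTop E] f)
    (hg : Continuous[tB, weakTop E] g) : Continuous[tB, weakTop E] fun b => f b + g b := by
  refine weakTop_cont_iff.2 fun φ => ?_
  letI := tB
  have h := (weakTop_cont_iff.1 hf φ).add (weakTop_cont_iff.1 hg φ)
  simp only [map_add]
  exact h

theorem const_smul (tB : TopologicalSpace B) {f : B → E} (hf : Continuous[tB, weakTop E] f)
    (c : ℂ) : Continuous[tB, weakTop E] fun b => c • f b := by
  refine weakTop_cont_iff.2 fun φ => ?_
  letI := tB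
  have h := (weakTop_cont_iff.1 hf φ).const_smul c
  simp only [map_smul, smul_eq_mul] at h ⊢
  exact h

theorem zero (tB : TopologicalSpace B) :
    Continuous[tB, weakTop E] fun _ : B => (0 : E) := by
  refine weakTop_cont_iff.2 fun φ => ?_
  letI := tB
  simpa using (continuous_const : Continuous fun _ : B => (0 : ℂ))

end WeakCont

/-- A Banach algebra structure on a normed space `A`: an associative continuous bilinear
multiplication satisfying `‖a * b‖ ≤ ‖a‖ * ‖b‖`. -/
structure BanachAlgStr (A : Type u) [NormedAddCommGroup A] [NormedSpace ℂ A] where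
  mul : A →L[ℂ] A →L[ℂ] A
  mul_assoc : ∀ a b c, mul (mul a b) c = mul a (mul b c)
  norm_mul_le : ∀ a b, ‖mul a b‖ ≤ ‖a‖ * ‖b‖

/-- `A`, with predual `X` (via `ρ`) and multiplication `S`, is a dual Banach algebra:
the multiplication is separately continuous for the weak-* topology `σ(A, X)`. -/
structure IsDualBanachAlgebra (ρ : A ≃ₗᵢ[ℂ] (X →L[ℂ] ℂ)) (S : BanachAlgStr A) : Prop where
  mul_left : ∀ a, Continuous[wstar ρ, wstar ρ] fun b => S.mul a b
  mul_right : ∀ a, Continuous[wstar ρ, wstar ρ] fun b => S.mul b a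

/-- A Banach `A`-bimodule structure (for the Banach algebra `(A, S)`) on a normed space `E`:
continuous bilinear left and right actions `l`, `r` which commute and are associative
for the multiplication `S.mul`. -/
structure BanachBimodule {A : Type u} [NormedAddCommGroup A] [NormedSpace ℂ A]
    (S : BanachAlgStr A) (E : Type u) [NormedAddCommGroup E] [NormedSpace ℂ E] where
  l : A →L[ℂ] E →L[ℂ] E
  r : A →L[ℂ] E →L[ℂ] E
  l_mul : ∀ a b x, l (S.mul a b) x = l a (l b x)
  r_mul : ∀ a b x, r (S.mul a b) x = r b (r a x)
  lr_comm : ∀ a b x, l a (r b x) = r b (l a x)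

/-- `A` as a Banach bimodule over itself, via multiplication. -/
def BanachAlgStr.toBimodule (S : BanachAlgStr A) : BanachBimodule S A where
  l := S.mul
  r := S.mul.flip
  l_mul := fun a b x => S.mul_assoc a b x
  r_mul := fun a b x => (S.mul_assoc x a b).symm
  lr_comm := fun a b x => (S.mul_assoc a x b).symm

variable {E : Type u} [NormedAddCommGroup E] [NormedSpace ℂ E]

/-- `σwc(E)`: the set of `x ∈ E` such that the maps `a ↦ a · x` and `a ↦ x · a` are
continuous from the weak-* topology on `A` into the weak topology on `E`.
It is a (closed) linear subspace of `E`. -/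
def sigmaWC (ρ : A ≃ₗᵢ[ℂ] (X →L[ℂ] ℂ)) {S : BanachAlgStr A} (M : BanachBimodule S E) :
    Submodule ℂ E where
  carrier := {x | Continuous[wstar ρ, weakTop E] (fun a => M.l a x) ∧
    Continuous[wstar ρ, weakTop E] fun a => M.r a x}
  add_mem' := by
    rintro x y ⟨h1, h2⟩ ⟨h3, h4⟩
    constructor
    · simp only [map_add]
      exact WeakCont.add _ h1 h3
    · simp only [map_add]
      exact WeakCont.add _ h2 h4
  zero_mem' := by
    constructor
    · simp only [map_zero]
      exact WeakCont.zero _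
    · simp only [map_zero]
      exact WeakCont.zero _
  smul_mem' := by
    rintro c x ⟨h1, h2⟩
    constructor
    · simp only [map_smul]
      exact WeakCont.const_smul _ h1 c
    · simp only [map_smul]
      exact WeakCont.const_smul _ h2 c

theorem smulL_mem_sigmaWC {ρ : A ≃ₗᵢ[ℂ] (X →L[ℂ] ℂ)} {S : BanachAlgStr A}
    {M : BanachBimodule S E} (hA : IsDualBanachAlgebra ρ S) {x : E}
    (hx : x ∈ sigmaWC ρ M) (a : A) : M.l a x ∈ sigmaWC ρ M := by
  obtain ⟨h1, h2⟩ := hx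
  constructor
  · have he : (fun c => M.l c (M.l a x)) = fun c => M.l (S.mul c a) x :=
      funext fun c => (M.l_mul c a x).symm
    rw [he]
    exact @Continuous.comp A A E (wstar ρ) (wstar ρ) (weakTop E) _ _ h1 (hA.mul_right a)
  · have he : (fun c => M.r c (M.l a x)) = fun c => M.l a (M.r c x) :=
      funext fun c => (M.lr_comm a c x).symm
    rw [he]
    exact WeakCont.clm_comp _ (M.l a) h2

theorem smulR_mem_sigmaWC {ρ : A ≃ₗᵢ[ℂ] (X →L[ℂ] ℂ)} {S : BanachAlgStr A}
    {M : BanachBimodule S E} (hA : IsDualBanachAlgebra ρ S) {x : E}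
    (hx : x ∈ sigmaWC ρ M) (a : A) : M.r a x ∈ sigmaWC ρ M := by
  obtain ⟨h1, h2⟩ := hx
  constructor
  · have he : (fun c => M.l c (M.r a x)) = fun c => M.r a (M.l c x) :=
      funext fun c => M.lr_comm c a x
    rw [he]
    exact WeakCont.clm_comp _ (M.r a) h1
  · have he : (fun c => M.r c (M.r a x)) = fun c => M.r (S.mul a c) x :=
      funext fun c => (M.r_mul a c x).symm
    rw [he]
    exact @Continuous.comp A A E (wstar ρ) (wstar ρ) (weakTop E) _ _ h2 (hA.mul_left a)

/-- `j_E : E* → σwc(E)*`, restriction of functionals (the adjoint of the inclusion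
`σwc(E) ↪ E`). -/
def jmap (ρ : A ≃ₗᵢ[ℂ] (X →L[ℂ] ℂ)) {S : BanachAlgStr A} (M : BanachBimodule S E)
    (φ : E →L[ℂ] ℂ) : ↥(sigmaWC ρ M) →L[ℂ] ℂ :=
  φ.comp (sigmaWC ρ M).subtypeL

/-- The left dual action of `A` on `σwc(E)*`: `(a · Λ)(x) = Λ(x · a)`. -/
def dualL {ρ : A ≃ₗᵢ[ℂ] (X →L[ℂ] ℂ)} {S : BanachAlgStr A} {M : BanachBimodule S E}
    (hA : IsDualBanachAlgebra ρ S) (a : A) (Λ : ↥(sigmaWC ρ M) →L[ℂ] ℂ) :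
    ↥(sigmaWC ρ M) →L[ℂ] ℂ :=
  Λ.comp (ContinuousLinearMap.codRestrict ((M.r a).comp (sigmaWC ρ M).subtypeL)
    (sigmaWC ρ M) fun x => smulR_mem_sigmaWC hA x.2 a)

/-- The right dual action of `A` on `σwc(E)*`: `(Λ · a)(x) = Λ(a · x)`. -/
def dualR {ρ : A ≃ₗᵢ[ℂ] (X →L[ℂ] ℂ)} {S : BanachAlgStr A} {M : BanachBimodule S E}
    (hA : IsDualBanachAlgebra ρ S) (a : A) (Λ : ↥(sigmaWC ρ M) →L[ℂ] ℂ) :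
    ↥(sigmaWC ρ M) →L[ℂ] ℂ :=
  Λ.comp (ContinuousLinearMap.codRestrict ((M.l a).comp (sigmaWC ρ M).subtypeL)
    (sigmaWC ρ M) fun x => smulL_mem_sigmaWC hA x.2 a)

/-- `D : A → E*` is a derivation for the dual bimodule actions of `A` on `E*`,
i.e. `D(ab) = a · D(b) + D(a) · b`, where `(a · φ)(x) = φ(x · a)` and
`(φ · a)(x) = φ(a · x)`. -/
def IsDerivationToDual (S : BanachAlgStr A) (M : BanachBimodule S E)
    (D : A →L[ℂ] (E →L[ℂ] ℂ)) : Prop :=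
  ∀ a b, D (S.mul a b) = (D b).comp (M.r a) + (D a).comp (M.l b)

/-- `D : A → E` is a derivation for the bimodule actions of `A` on `E`:
`D(ab) = a · D(b) + D(a) · b`. -/
def IsDerivationInto (S : BanachAlgStr A) (M : BanachBimodule S E)
    (D : A →L[ℂ] E) : Prop :=
  ∀ a b, D (S.mul a b) = M.l a (D b) + M.r b (D a)

/-- The dual Banach algebra `(A, ρ, S)` is weakly Connes amenable: for every derivation
`D : A → A*` such that `j_A ∘ D : A → σwc(A)*` is weak-*–weak-* continuous, the
derivation `j_A ∘ D` is inner, i.e. of the form `a ↦ a · Φ - Φ · a` for some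
`Φ ∈ σwc(A)*`. -/
def WeaklyConnesAmenable (ρ : A ≃ₗᵢ[ℂ] (X →L[ℂ] ℂ)) (S : BanachAlgStr A)
    (hA : IsDualBanachAlgebra ρ S) : Prop :=
  ∀ D : A →L[ℂ] (A →L[ℂ] ℂ), IsDerivationToDual S S.toBimodule D →
    Continuous[wstar ρ, wstarD ↥(sigmaWC ρ S.toBimodule)]
      (fun a => jmap ρ S.toBimodule (D a)) →
    ∃ Φ, ∀ a, jmap ρ S.toBimodule (D a) = dualL hA a Φ - dualR hA a Φ

end Core

section Connes

variable {A X : Type u} [NormedAddCommGroup A] [NormedSpace ℂ A]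
  [NormedAddCommGroup X] [NormedSpace ℂ X]

/-- A dual Banach `A`-bimodule `E = F*` is normal if the module actions of `A` on `E` are
weak-*–weak-* continuous. -/
def IsNormal (ρ : A ≃ₗᵢ[ℂ] (X →L[ℂ] ℂ)) {S : BanachAlgStr A} {F : Type u}
    [NormedAddCommGroup F] [NormedSpace ℂ F] (M : BanachBimodule S (F →L[ℂ] ℂ)) : Prop :=
  ∀ x, Continuous[wstar ρ, wstarD F] (fun a => M.l a x) ∧
    Continuous[wstar ρ, wstarD F] fun a => M.r a x

/-- The dual Banach algebra `(A, ρ, S)` is Connes amenable: for every normal dual Banach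
`A`-bimodule `E = F*`, every weak-*–weak-* continuous derivation `D : A → E` is inner. -/
def ConnesAmenable (ρ : A ≃ₗᵢ[ℂ] (X →L[ℂ] ℂ)) (S : BanachAlgStr A) : Prop :=
  ∀ (F : Type u) [NormedAddCommGroup F] [NormedSpace ℂ F] [CompleteSpace F],
    ∀ M : BanachBimodule S (F →L[ℂ] ℂ), IsNormal ρ M →
      ∀ D : A →L[ℂ] (F →L[ℂ] ℂ), IsDerivationInto S M D →
        Continuous[wstar ρ, wstarD F] (fun a => D a) →
        ∃ x, ∀ a, D a = M.l a x - M.r a x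

end Connes

section Approx

variable {A X : Type u} [NormedAddCommGroup A] [NormedSpace ℂ A]
  [NormedAddCommGroup X] [NormedSpace ℂ X]

/-- `D : A → E` is `w*`-approximately inner for the module actions `l`, `r` on `E` and the
weak-* topology `tE` on `E`: there is a net `(g_α)` in `E` with
`D(a) = w*-lim_α (a · g_α - g_α · a)` for every `a`. -/
def WstarApproxInner {A' : Type u} {E' : Type u} [AddCommGroup E']
    (tE : TopologicalSpace E') (l r : A' → E' → E') (D : A' → E') : Prop :=
  ∃ (ι : Type u) (fl : Filter ι), fl.NeBot ∧ ∃ g : ι → E',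
    ∀ a, Filter.Tendsto (fun i => l a (g i) - r a (g i)) fl (@nhds _ tE (D a))

/-- The dual Banach algebra `(A, ρ, S)` is `w*`-approximately Connes amenable: every
weak-*–weak-* continuous derivation into a normal dual Banach `A`-bimodule `E = F*`
is `w*`-approximately inner. -/
def WstarApproxConnesAmenable (ρ : A ≃ₗᵢ[ℂ] (X →L[ℂ] ℂ)) (S : BanachAlgStr A) : Prop :=
  ∀ (F : Type u) [NormedAddCommGroup F] [NormedSpace ℂ F] [CompleteSpace F],
    ∀ M : BanachBimodule S (F →L[ℂ] ℂ), IsNormal ρ M →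
      ∀ D : A →L[ℂ] (F →L[ℂ] ℂ), IsDerivationInto S M D →
        Continuous[wstar ρ, wstarD F] (fun a => D a) →
        WstarApproxInner (wstarD F) (fun a x => M.l a x) (fun a x => M.r a x)
          (fun a => D a)

/-- The dual Banach algebra `(A, ρ, S)` is `w*`-approximately weakly Connes amenable: for
every derivation `D : A → A*` such that `j_A ∘ D : A → σwc(A)*` is weak-*–weak-*
continuous, the derivation `j_A ∘ D` is `w*`-approximately inner. -/
def WstarApproxWeaklyConnesAmenable (ρ : A ≃ₗᵢ[ℂ] (X →L[ℂ] ℂ)) (S : BanachAlgStr A)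
    (hA : IsDualBanachAlgebra ρ S) : Prop :=
  ∀ D : A →L[ℂ] (A →L[ℂ] ℂ), IsDerivationToDual S S.toBimodule D →
    Continuous[wstar ρ, wstarD ↥(sigmaWC ρ S.toBimodule)]
      (fun a => jmap ρ S.toBimodule (D a)) →
    WstarApproxInner (wstarD ↥(sigmaWC ρ S.toBimodule))
      (fun a Λ => dualL hA a Λ) (fun a Λ => dualR hA a Λ)
      (fun a => jmap ρ S.toBimodule (D a))

end Approx

section Predual

variable {A X : Type u} [NormedAddCommGroup A] [NormedSpace ℂ A]
  [NormedAddCommGroup X] [NormedSpace ℂ X]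

/-- The canonical isometry `X → X** ≅ A*`. -/
def predualEmbedding (ρ : A ≃ₗᵢ[ℂ] (X →L[ℂ] ℂ)) : X →ₗᵢ[ℂ] (A →L[ℂ] ℂ) where
  toFun ξ := (NormedSpace.inclusionInDoubleDual ℂ X ξ).comp (ρ : A →L[ℂ] (X →L[ℂ] ℂ))
  map_add' ξ η := by ext a; exact map_add (ρ a) ξ η
  map_smul' c ξ := by ext a; exact map_smul (ρ a) c ξ
  norm_map' ξ := by
    show ‖(NormedSpace.inclusionInDoubleDual ℂ X ξ).comp _‖ = ‖ξ‖
    rw [ContinuousLinearMap.opNorm_comp_linearIsometryEquiv]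
    exact (NormedSpace.inclusionInDoubleDualLi ℂ).norm_map ξ

theorem range_predualEmbedding (ρ : A ≃ₗᵢ[ℂ] (X →L[ℂ] ℂ)) :
    Set.range (predualEmbedding ρ) = {ψ | Continuous[wstar ρ, inferInstance] fun a => ψ a} := by
  ext ψ
  constructor
  · rintro ⟨ξ, rfl⟩
    exact topOfPairing_eval_cont _ ξ
  · intro hψ
    let B : A →ₗ[ℂ] X →ₗ[ℂ] ℂ := ContinuousLinearMap.coeLM ℂ ∘ₗ ρ.toLinearMap
    obtain ⟨ξ, hξ⟩ := LinearMap.dualEmbedding_surjective B ⟨ψ.toLinearMap, hψ⟩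
    exact ⟨ξ, ContinuousLinearMap.ext fun a => congrArg (· a) hξ⟩

theorem isClosed_setOf_wstar_continuous [CompleteSpace X] (ρ : A ≃ₗᵢ[ℂ] (X →L[ℂ] ℂ)) :
    IsClosed {ψ : A →L[ℂ] ℂ | Continuous[wstar ρ, inferInstance] fun a => ψ a} := by
  rw [← range_predualEmbedding]
  exact (predualEmbedding ρ).isometry.isClosedEmbedding.isClosed_range

end Predual

section SigmaWC

variable {A X E : Type u} [NormedAddCommGroup A] [NormedSpace ℂ A]
  [NormedAddCommGroup X] [NormedSpace ℂ X] [NormedAddCommGroup E] [NormedSpace ℂ E]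

theorem isClosed_setOf_wstar_weakTop_continuous [CompleteSpace X]
    (ρ : A ≃ₗᵢ[ℂ] (X →L[ℂ] ℂ)) (L : A →L[ℂ] E →L[ℂ] E) :
    IsClosed {x | Continuous[wstar ρ, weakTop E] fun a => L a x} := by
  simp_rw [weakTop_cont_iff, Set.ofPred_forall]
  exact isClosed_iInter fun φ => (isClosed_setOf_wstar_continuous ρ).preimage
    ((ContinuousLinearMap.compL ℂ A E ℂ φ).comp L.flip).continuous

theorem isClosed_sigmaWC [CompleteSpace X] (ρ : A ≃ₗᵢ[ℂ] (X →L[ℂ] ℂ)) {S : BanachAlgStr A}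
    (M : BanachBimodule S E) : IsClosed (sigmaWC ρ M : Set E) :=
  (isClosed_setOf_wstar_weakTop_continuous ρ M.l).inter
    (isClosed_setOf_wstar_weakTop_continuous ρ M.r)

end SigmaWC

section Bimodules

variable {A E : Type u} [NormedAddCommGroup A] [NormedSpace ℂ A]
  [NormedAddCommGroup E] [NormedSpace ℂ E]

def ContinuousLinearMap.restrictInvariant (L : A →L[ℂ] E →L[ℂ] E) (p : Submodule ℂ E)
    (hp : ∀ a, ∀ x ∈ p, L a x ∈ p) : A →L[ℂ] p →L[ℂ] p :=
  LinearMap.mkContinuous₂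
    (LinearMap.mk₂ ℂ (fun a x => ⟨L a x, hp a x x.2⟩)
      (fun a b x => Subtype.ext (by simp)) (fun c a x => Subtype.ext (by simp))
      (fun a x y => Subtype.ext (by simp)) (fun a c x => Subtype.ext (by simp)))
    ‖L‖ fun a x => L.le_opNorm₂ a x

namespace BanachBimodule

variable {S : BanachAlgStr A}

def restrict (M : BanachBimodule S E) (p : Submodule ℂ E) (hl : ∀ a, ∀ x ∈ p, M.l a x ∈ p)
    (hr : ∀ a, ∀ x ∈ p, M.r a x ∈ p) : BanachBimodule S p where
  l := M.l.restrictInvariant p hl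
  r := M.r.restrictInvariant p hr
  l_mul a b x := Subtype.ext (M.l_mul a b x)
  r_mul a b x := Subtype.ext (M.r_mul a b x)
  lr_comm a b x := Subtype.ext (M.lr_comm a b x)

/-- The dual bimodule `E*`, with `(a · φ)(x) = φ(x · a)` and `(φ · a)(x) = φ(a · x)`. -/
def dual (M : BanachBimodule S E) : BanachBimodule S (E →L[ℂ] ℂ) where
  l := (ContinuousLinearMap.compL ℂ E E ℂ).flip.comp M.r
  r := (ContinuousLinearMap.compL ℂ E E ℂ).flip.comp M.l
  l_mul a b φ := by ext x; exact congrArg φ (M.r_mul a b x)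
  r_mul a b φ := by ext x; exact congrArg φ (M.l_mul a b x)
  lr_comm a b φ := by ext x; exact congrArg φ (M.lr_comm b a x)

end BanachBimodule

end Bimodules

theorem weakTop_continuous_codRestrict {B : Type*} {tB : TopologicalSpace B} {E : Type u}
    [NormedAddCommGroup E] [NormedSpace ℂ E] {p : Submodule ℂ E} {f : B → E}
    (hf : Continuous[tB, weakTop E] f) (hp : ∀ b, f b ∈ p) :
    Continuous[tB, weakTop p] fun b => (⟨f b, hp b⟩ : p) := by
  refine weakTop_cont_iff.2 fun Λ => ?_
  obtain ⟨φ, hφ, -⟩ := exists_extension_norm_eq p Λ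
  simp only [← hφ]
  exact weakTop_cont_iff.1 hf φ

section SigmaWCBimodule

variable {A X E : Type u} [NormedAddCommGroup A] [NormedSpace ℂ A]
  [NormedAddCommGroup X] [NormedSpace ℂ X] [NormedAddCommGroup E] [NormedSpace ℂ E]
  {ρ : A ≃ₗᵢ[ℂ] (X →L[ℂ] ℂ)} {S : BanachAlgStr A}

def sigmaWCBimodule (hA : IsDualBanachAlgebra ρ S) (M : BanachBimodule S E) :
    BanachBimodule S (sigmaWC ρ M) :=
  M.restrict (sigmaWC ρ M) (fun a _ hx => smulL_mem_sigmaWC hA hx a)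
    (fun a _ hx => smulR_mem_sigmaWC hA hx a)

theorem isNormal_dual_sigmaWCBimodule (hA : IsDualBanachAlgebra ρ S) (M : BanachBimodule S E) :
    IsNormal ρ (sigmaWCBimodule hA M).dual := fun Λ =>
  ⟨continuous_topOfPairing_iff.2 fun x => weakTop_cont_iff.1
      (weakTop_continuous_codRestrict x.2.2 fun a => smulR_mem_sigmaWC hA x.2 a) Λ,
    continuous_topOfPairing_iff.2 fun x => weakTop_cont_iff.1
      (weakTop_continuous_codRestrict x.2.1 fun a => smulL_mem_sigmaWC hA x.2 a) Λ⟩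

/-- `j_E` as a bounded operator `E* → σwc(E)*`. -/
def jmapL (ρ : A ≃ₗᵢ[ℂ] (X →L[ℂ] ℂ)) (M : BanachBimodule S E) :
    (E →L[ℂ] ℂ) →L[ℂ] (sigmaWC ρ M →L[ℂ] ℂ) :=
  (ContinuousLinearMap.compL ℂ (sigmaWC ρ M) E ℂ).flip (sigmaWC ρ M).subtypeL

theorem isDerivationInto_dual_sigmaWCBimodule (hA : IsDualBanachAlgebra ρ S)
    {M : BanachBimodule S E} {D : A →L[ℂ] (E →L[ℂ] ℂ)} (hD : IsDerivationToDual S M D) :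
    IsDerivationInto S (sigmaWCBimodule hA M).dual ((jmapL ρ M).comp D) := by
  intro a b
  ext x
  exact congrArg (· (x : E)) (hD a b)

end SigmaWCBimodule

theorem WstarApproxConnesAmenable.wstarApproxWeaklyConnesAmenable {A X : Type u}
    [NormedAddCommGroup A] [NormedSpace ℂ A] [CompleteSpace A]
    [NormedAddCommGroup X] [NormedSpace ℂ X] [CompleteSpace X]
    {ρ : A ≃ₗᵢ[ℂ] (X →L[ℂ] ℂ)} {S : BanachAlgStr A} (hA : IsDualBanachAlgebra ρ S)
    (h : WstarApproxConnesAmenable ρ S) : WstarApproxWeaklyConnesAmenable ρ S hA := by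
  intro D hD hcont
  have : CompleteSpace (sigmaWC ρ S.toBimodule) :=
    (isClosed_sigmaWC ρ S.toBimodule).completeSpace_coe
  -- `(sigmaWCBimodule hA _).dual` acts on `σwc(A)*` by `dualL`, `dualR` definitionally
  exact h _ _ (isNormal_dual_sigmaWCBimodule hA S.toBimodule) _
    (isDerivationInto_dual_sigmaWCBimodule hA hD) hcont

theorem t2Space_topOfPairing {A X : Type*} {p : A → X → ℂ} (hp : Function.Injective p) :
    @T2Space A (topOfPairing p) :=
  @T2Space.of_injective_continuous _ _ (topOfPairing p) _ _ _ hp continuous_induced_dom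

theorem t2Space_wstarD (E : Type u) [NormedAddCommGroup E] [NormedSpace ℂ E] :
    @T2Space _ (wstarD E) :=
  t2Space_topOfPairing fun _ _ h => ContinuousLinearMap.ext (congrFun h)

theorem WstarApproxInner.eq_zero_of_forall_eq {A' E' : Type u} [AddCommGroup E']
    {tE : TopologicalSpace E'} (hT2 : @T2Space E' tE) {l r : A' → E' → E'} {D : A' → E'}
    (hlr : ∀ a x, l a x = r a x) (h : WstarApproxInner tE l r D) (a : A') : D a = 0 := by
  obtain ⟨ι, fl, hfl, g, hg⟩ := h
  have h0 := hg a
  simp only [hlr, sub_self] at h0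
  let := tE
  exact tendsto_nhds_unique h0 tendsto_const_nhds

theorem dualL_toBimodule_eq_dualR {A X : Type u} [NormedAddCommGroup A] [NormedSpace ℂ A]
    [NormedAddCommGroup X] [NormedSpace ℂ X] {ρ : A ≃ₗᵢ[ℂ] (X →L[ℂ] ℂ)} {S : BanachAlgStr A}
    (hA : IsDualBanachAlgebra ρ S) (hcomm : ∀ a b, S.mul a b = S.mul b a) (a : A)
    (Λ : sigmaWC ρ S.toBimodule →L[ℂ] ℂ) : dualL hA a Λ = dualR hA a Λ := by
  ext x
  exact congrArg Λ (Subtype.ext (hcomm x a))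

/-- **Proposition 3.12.** Every commutative, `w*`-approximately Connes amenable dual
Banach algebra is weakly Connes amenable. -/
theorem comm_wstarApproxConnesAmenable_weaklyConnesAmenable {A X : Type u} [NormedAddCommGroup A] [NormedSpace ℂ A] [CompleteSpace A]
    [NormedAddCommGroup X] [NormedSpace ℂ X] [CompleteSpace X]
    (ρ : A ≃ₗᵢ[ℂ] (X →L[ℂ] ℂ)) (S : BanachAlgStr A) (hA : IsDualBanachAlgebra ρ S)
    (hcomm : ∀ a b, S.mul a b = S.mul b a)
    (hACA : WstarApproxConnesAmenable ρ S) : WeaklyConnesAmenable ρ S hA := by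
  intro D hD hcont
  refine ⟨0, fun a => ?_⟩
  rw [(hACA.wstarApproxWeaklyConnesAmenable hA D hD hcont).eq_zero_of_forall_eq (t2Space_wstarD _)
    (dualL_toBimodule_eq_dualR hA hcomm) a, dualL_toBimodule_eq_dualR hA hcomm, sub_self]
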